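/- arXiv:2303.03734 — 2 statements merged into one kernel-verified Lean document; each statement's English description precedes it below -/
import Mathlib

section
/- Let r ≥ 1, g ≥ 1, and let z be a nonzero complex number. Then ∑_{σ ∈ S_r} det(I_r − z⁻¹·A_σ)^{2g} = z^{−2gr} · ∑_{σ ∈ S_r} det(I_r − z·A_σ)^{2g}, where both sums run over all permutations σ of {1,…,r}. -/
/-!
Since `A_σ` is invertible with inverse `A_{σ⁻¹}`, one can factor
`1 - z⁻¹ A_σ = (-z⁻¹ A_σ) (1 - z A_{σ⁻¹})`. Taking determinants produces the factor
`(-z⁻¹)^r · sign σ`, which becomes `z^{-2gr}` after raising to the even power `2g`;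
reindexing the sum by `σ ↦ σ⁻¹` finishes the proof.
-/

/-- For a permutation `σ` of `Fin r`, the associated `r × r` permutation matrix over `ℂ`,
with `(A_σ)_{ij} = 1` if `i = σ j` and `0` otherwise. -/
def permMat (r : ℕ) (σ : Equiv.Perm (Fin r)) : Matrix (Fin r) (Fin r) ℂ :=
  Matrix.of fun i j => if i = σ j then (1 : ℂ) else 0

open Matrix Equiv

section

variable {n K : Type*} [Fintype n] [DecidableEq n] [Field K]

theorem one_sub_inv_smul_permMatrix {z : K} (hz : z ≠ 0) (σ : Perm n) :
    1 - z⁻¹ • σ.permMatrix K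
      = (-z⁻¹ • σ.permMatrix K) * (1 - z • σ⁻¹.permMatrix K) := by
  rw [Matrix.mul_sub, Matrix.mul_one, Matrix.smul_mul, Matrix.mul_smul, ← permMatrix_mul,
    inv_mul_cancel, permMatrix_one, smul_smul, neg_mul, inv_mul_cancel₀ hz, neg_smul, neg_smul,
    one_smul, sub_neg_eq_add, neg_add_eq_sub]

theorem det_one_sub_inv_smul_permMatrix {z : K} (hz : z ≠ 0) (σ : Perm n) :
    det (1 - z⁻¹ • σ.permMatrix K)
      = (-z⁻¹) ^ Fintype.card n * Perm.sign σ * det (1 - z • σ⁻¹.permMatrix K) := by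
  rw [one_sub_inv_smul_permMatrix hz, det_mul, det_smul, det_permutation]

theorem det_one_sub_inv_smul_permMatrix_pow_two_mul {z : K} (hz : z ≠ 0) (σ : Perm n)
    (g : ℕ) :
    det (1 - z⁻¹ • σ.permMatrix K) ^ (2 * g)
      = z ^ (-(2 * (g : ℤ) * Fintype.card n)) *
          det (1 - z • σ⁻¹.permMatrix K) ^ (2 * g) := by
  have h_scalar :
      ((-z⁻¹) ^ Fintype.card n) ^ (2 * g) = z ^ (-(2 * (g : ℤ) * Fintype.card n)) := by
    rw [← pow_mul, Even.neg_pow ⟨Fintype.card n * g, by ring⟩, inv_pow, ← zpow_natCast,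
      ← _root_.zpow_neg]
    push_cast
    ring_nf
  have h_sign : ((Perm.sign σ : ℤ) : K) ^ (2 * g) = 1 := by
    rw [pow_mul, ← Int.cast_pow, ← Units.val_pow_eq_pow_val, Int.units_sq, Units.val_one,
      Int.cast_one, one_pow]
  rw [det_one_sub_inv_smul_permMatrix hz, mul_pow, mul_pow, h_scalar, h_sign, mul_one]

theorem sum_det_one_sub_inv_smul_permMatrix_pow_two_mul {z : K} (hz : z ≠ 0) (g : ℕ) :
    ∑ σ : Perm n, det (1 - z⁻¹ • σ.permMatrix K) ^ (2 * g)
      = z ^ (-(2 * (g : ℤ) * Fintype.card n)) *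
          ∑ σ : Perm n, det (1 - z • σ.permMatrix K) ^ (2 * g) := by
  simp_rw [det_one_sub_inv_smul_permMatrix_pow_two_mul hz, ← Finset.mul_sum]
  congr 1
  exact Fintype.sum_equiv (Equiv.inv (Perm n)) _ _ fun _ => rfl

end

theorem permMat_eq_permMatrix_inv (r : ℕ) (σ : Perm (Fin r)) :
    permMat r σ = σ⁻¹.permMatrix ℂ := by
  ext i j
  simp [permMat, PEquiv.toMatrix_apply, Perm.inv_def, eq_symm_apply, eq_comm]

theorem curious_poincare_duality_general (r g : ℕ) (z : ℂ) (hz : z ≠ 0) :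
    ∑ σ : Equiv.Perm (Fin r),
        ((1 : Matrix (Fin r) (Fin r) ℂ) - z⁻¹ • permMat r σ).det ^ (2 * g)
      = z ^ (-(2 * (g : ℤ) * (r : ℤ))) *
        ∑ σ : Equiv.Perm (Fin r),
          ((1 : Matrix (Fin r) (Fin r) ℂ) - z • permMat r σ).det ^ (2 * g) := by
  have h_reindex : ∀ f : Matrix (Fin r) (Fin r) ℂ → ℂ,
      ∑ σ : Perm (Fin r), f (permMat r σ) = ∑ σ : Perm (Fin r), f (σ.permMatrix ℂ) :=
    fun f => Fintype.sum_equiv (Equiv.inv _) _ _ fun σ => by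
      rw [permMat_eq_permMatrix_inv]; rfl
  rw [h_reindex fun A => (1 - z⁻¹ • A).det ^ (2 * g),
    h_reindex fun A => (1 - z • A).det ^ (2 * g),
    sum_det_one_sub_inv_smul_permMatrix_pow_two_mul hz, Fintype.card_fin]

/-- Curious Poincaré duality identity:
`∑_{σ ∈ S_r} det(I_r − z⁻¹·A_σ)^{2g} = z^{−2gr} · ∑_{σ ∈ S_r} det(I_r − z·A_σ)^{2g}`. -/
theorem curious_poincare_duality (r g : ℕ) (hr : 1 ≤ r) (hg : 1 ≤ g) (z : ℂ) (hz : z ≠ 0) :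
    ∑ σ : Equiv.Perm (Fin r),
        ((1 : Matrix (Fin r) (Fin r) ℂ) - z⁻¹ • permMat r σ).det ^ (2 * g)
      = z ^ (-(2 * (g : ℤ) * (r : ℤ))) *
        ∑ σ : Equiv.Perm (Fin r),
          ((1 : Matrix (Fin r) (Fin r) ℂ) - z • permMat r σ).det ^ (2 * g) :=
  curious_poincare_duality_general r g z hz
end

section
/- Let g, r ≥ 1 and let λ_1,…,λ_r and μ_1,…,μ_r be vectors in ℂ^g. Suppose that for every u ∈ ℂ^g the multiset {⟨u,λ_1⟩,…,⟨u,λ_r⟩} of complex numbers equals the multiset {⟨u,μ_1⟩,…,⟨u,μ_r⟩}, where ⟨u,v⟩ = ∑_{j=1}^g u_j v_j. Then the multiset {λ_1,…,λ_r} of vectors equals the multiset {μ_1,…,μ_r}; that is, there is a permutation σ of {1,…,r} with μ_i = λ_{σ(i)} for all i. -/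
/-!
Over an infinite field the linear forms `u` with `⟨u, v⟩ = ⟨u, w⟩` for some pair `v ≠ w` of the
finitely many vectors `λ_i, μ_i` form a finite union of proper subspaces, so some `u` avoids
them all and `⟨u, ·⟩` is injective on these vectors. For that `u` the hypothesis matches the
scalars `⟨u, μ_i⟩` with the `⟨u, λ_{σ i}⟩` for a permutation `σ`, and injectivity lifts this
matching to the vectors.
-/

open Matrix

theorem Fintype.exists_equiv_comp_eq_of_map_univ_eq {ι κ α : Type*} [Fintype ι] [Fintype κ]
    (f : ι → α) (g : κ → α)
    (h : Multiset.map f Finset.univ.val = Multiset.map g Finset.univ.val) :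
    ∃ e : κ ≃ ι, ∀ k, g k = f (e k) := by
  classical
  have hfiber : ∀ c, Fintype.card {k // g k = c} = Fintype.card {i // f i = c} := by
    intro c
    have hcount := congrArg (Multiset.count c) h
    rw [Multiset.count_map, Multiset.count_map] at hcount
    simpa [Fintype.card_subtype, eq_comm, Finset.card_def, Finset.filter_val] using hcount.symm
  exact ⟨Equiv.ofFiberEquiv fun c => Fintype.equivOfCardEq (hfiber c),
    fun k => (Equiv.ofFiberEquiv_map _ k).symm⟩

theorem exists_dotProduct_injOn {K ι : Type*} [Field K] [Infinite K] [Fintype ι]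
    {s : Set (ι → K)} (hs : s.Finite) : ∃ u : ι → K, Set.InjOn (u ⬝ᵥ ·) s := by
  have : Finite s := hs
  let collision (p : {p : s × s // p.1 ≠ p.2}) : Subspace K (ι → K) :=
    LinearMap.ker ((dotProductBilin K K).flip ((p.1.1 : ι → K) - p.1.2))
  have hproper : ∀ p, collision p ≠ ⊤ := by
    rintro ⟨⟨v, w⟩, hvw⟩ htop
    refine hvw (Subtype.ext (sub_eq_zero.mp (dotProduct_eq_zero_iff.mp fun u => ?_)))
    have hu : u ∈ collision _ := htop ▸ Submodule.mem_top
    simpa [collision, dotProductBilin, dotProduct_comm] using hu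
  obtain ⟨u, hu⟩ := (Set.ne_univ_iff_exists_notMem _).mp
    (mt (Subspace.exists_eq_top_of_iUnion_eq_univ (p := collision)) (not_exists.mpr hproper))
  refine ⟨u, fun v hv w hw hvw => by_contra fun hne =>
    hu (Set.mem_iUnion.mpr ⟨⟨(⟨v, hv⟩, ⟨w, hw⟩), ?_⟩, ?_⟩)⟩
  · simpa using hne
  · simp [collision, dotProductBilin, hvw]

theorem multiset_eq_of_forall_eval_multiset_eq_general (g r : ℕ)
    (lam mu : Fin r → (Fin g → ℂ))
    (h : ∀ u : Fin g → ℂ,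
      Multiset.map (fun i => ∑ j, u j * lam i j) Finset.univ.val =
        Multiset.map (fun i => ∑ j, u j * mu i j) Finset.univ.val) :
    ∃ σ : Equiv.Perm (Fin r), ∀ i, mu i = lam (σ i) := by
  obtain ⟨u, hu⟩ := exists_dotProduct_injOn ((Set.finite_range lam).union (Set.finite_range mu))
  obtain ⟨σ, hσ⟩ := Fintype.exists_equiv_comp_eq_of_map_univ_eq _ _ (h u)
  exact ⟨σ, fun i => hu (Or.inr ⟨i, rfl⟩) (Or.inl ⟨σ i, rfl⟩) (hσ i)⟩

/-- If two unordered `r`-tuples of vectors `λ, μ` in `ℂ^g` have, for every `u ∈ ℂ^g`, the same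
multiset of linear-form evaluations `{⟨u, λ_i⟩} = {⟨u, μ_i⟩}` (with `⟨u,v⟩ = ∑_j u_j v_j`),
then they agree as multisets of vectors: there is a permutation `σ` of `{1, …, r}` with
`μ_i = λ_{σ(i)}` for all `i`. -/
theorem multiset_eq_of_forall_eval_multiset_eq (g r : ℕ) (hg : 1 ≤ g) (hr : 1 ≤ r)
    (lam mu : Fin r → (Fin g → ℂ))
    (h : ∀ u : Fin g → ℂ,
      Multiset.map (fun i => ∑ j, u j * lam i j) Finset.univ.val =
        Multiset.map (fun i => ∑ j, u j * mu i j) Finset.univ.val) :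
    ∃ σ : Equiv.Perm (Fin r), ∀ i, mu i = lam (σ i) :=
  multiset_eq_of_forall_eval_multiset_eq_general g r lam mu h
end
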